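/- arXiv:2301.03481 — 4 statements merged into one kernel-verified Lean document; each statement's English description precedes it below -/
import Mathlib

section
/- Let λ > 0, let (q_k)_{k∈ℕ} be nonnegative real numbers with ∑_{k≥0} q_k = 1, let G(w) = ∑_{k≥0} q_k w^k, set 𝓜(w) = exp(λ (G(w) − 1)), and define γ(w) = 𝓜((1−w)/2) / 𝓜(1/2). Then γ''(0) − (γ'(0))^2 − γ'(0) = λ ∑_{k≥0} k^2 2^{−k} q_k = λ E[Z^2 (1/2)^Z] ≥ 0, where Z is a random variable with ℙ(Z = k) = q_k. -/
/-!
Write `γ = exp ∘ h` with `h w = λ (G ((1 - w) / 2) - G (1 / 2))`, so that `h 0 = 0`,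
`γ'(0) = h'(0)` and `γ''(0) = h''(0) + h'(0)²`. The quantity in question is therefore
`h''(0) - h'(0) = λ (G''(1/2) / 4 + G'(1/2) / 2)`, which is `λ ∑ k² 2⁻ᵏ qₖ` because
`k (k - 1) + k = k²`. Since the coefficients `qₖ` are bounded, `G` may be differentiated termwise
on the open unit interval.
-/

open Real Set Filter Topology

noncomputable def powerSeriesIteratedDeriv (a : ℕ → ℝ) (n : ℕ) (x : ℝ) : ℝ :=
  ∑' k, a k * (k.descFactorial n * x ^ (k - n))

section PowerSeries

variable {a : ℕ → ℝ} {C : ℝ}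

lemma descFactorial_mul_pow_sub_mul_pow (k n : ℕ) (x : ℝ) :
    (k.descFactorial n : ℝ) * (x ^ (k - n) * x ^ n) = k.descFactorial n * x ^ k := by
  rcases lt_or_ge k n with h | h
  · simp [Nat.descFactorial_eq_zero_iff_lt.mpr h]
  · rw [pow_sub_mul_pow x h]

lemma hasDerivAt_descFactorial_mul_pow_sub (k n : ℕ) (y : ℝ) :
    HasDerivAt (fun z : ℝ => (k.descFactorial n : ℝ) * z ^ (k - n))
      ((k.descFactorial (n + 1) : ℝ) * y ^ (k - (n + 1))) y := by
  refine ((hasDerivAt_pow (k - n) y).const_mul (k.descFactorial n : ℝ)).congr_deriv ?_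
  rw [Nat.descFactorial_succ, Nat.cast_mul, Nat.sub_sub]
  ring

lemma norm_coeff_mul_descFactorial_mul_pow_sub_le (hC : ∀ k, |a k| ≤ C) {r y : ℝ}
    (hr : 0 < r) (hy : |y| ≤ r) (k n : ℕ) :
    ‖a k * (k.descFactorial n * y ^ (k - n))‖ ≤ C * ((r ^ n)⁻¹ * (k ^ n * r ^ k)) := by
  rw [Real.norm_eq_abs, abs_mul]
  refine mul_le_mul (hC k) ?_ (abs_nonneg _) ((abs_nonneg _).trans (hC k))
  rcases lt_or_ge k n with h | h
  · simp only [Nat.descFactorial_eq_zero_iff_lt.mpr h, Nat.cast_zero, zero_mul, abs_zero]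
    positivity
  · calc |(k.descFactorial n : ℝ) * y ^ (k - n)|
        ≤ (k : ℝ) ^ n * r ^ (k - n) := by
          rw [abs_mul, abs_pow, Nat.abs_cast]
          gcongr
          exact_mod_cast Nat.descFactorial_le_pow k n
      _ = (r ^ n)⁻¹ * (k ^ n * r ^ k) := by
          rw [pow_sub₀ r hr.ne' h]
          ring

lemma summable_mul_pow_mul_geometric {r : ℝ} (hr₀ : 0 ≤ r) (hr₁ : r < 1) (n : ℕ) :
    Summable fun k : ℕ => C * ((r ^ n)⁻¹ * ((k : ℝ) ^ n * r ^ k)) := by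
  refine ((summable_pow_mul_geometric_of_norm_lt_one n ?_).mul_left (r ^ n)⁻¹).mul_left C
  rwa [Real.norm_eq_abs, abs_of_nonneg hr₀]

lemma summable_coeff_mul_descFactorial_mul_pow_sub (hC : ∀ k, |a k| ≤ C) {x : ℝ}
    (hx : |x| < 1) (n : ℕ) :
    Summable fun k => a k * (k.descFactorial n * x ^ (k - n)) := by
  obtain ⟨r, hxr, hr₁⟩ := exists_between hx
  have hr : 0 < r := (abs_nonneg x).trans_lt hxr
  exact .of_norm_bounded (summable_mul_pow_mul_geometric hr.le hr₁ n)
    fun k => norm_coeff_mul_descFactorial_mul_pow_sub_le hC hr hxr.le k n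

theorem hasDerivAt_powerSeriesIteratedDeriv (hC : ∀ k, |a k| ≤ C) {x : ℝ} (hx : |x| < 1)
    (n : ℕ) :
    HasDerivAt (powerSeriesIteratedDeriv a n) (powerSeriesIteratedDeriv a (n + 1) x) x := by
  obtain ⟨r, hxr, hr₁⟩ := exists_between hx
  have hr : 0 < r := (abs_nonneg x).trans_lt hxr
  have hx_mem : x ∈ Ioo (-r) r := abs_lt.mp hxr
  exact hasDerivAt_tsum_of_isPreconnected (summable_mul_pow_mul_geometric hr.le hr₁ (n + 1))
    isOpen_Ioo isPreconnected_Ioo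
    (fun k y _ => (hasDerivAt_descFactorial_mul_pow_sub k n y).const_mul (a k))
    (fun k y hy => norm_coeff_mul_descFactorial_mul_pow_sub_le hC hr
      (abs_le.mpr ⟨hy.1.le, hy.2.le⟩) k (n + 1))
    hx_mem (summable_coeff_mul_descFactorial_mul_pow_sub hC hx n) hx_mem

lemma hasSum_coeff_mul_descFactorial_mul_pow (hC : ∀ k, |a k| ≤ C) {x : ℝ} (hx : |x| < 1)
    (n : ℕ) :
    HasSum (fun k => a k * (k.descFactorial n * x ^ k))
      (x ^ n * powerSeriesIteratedDeriv a n x) := by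
  rw [mul_comm]
  simpa only [powerSeriesIteratedDeriv, mul_assoc, descFactorial_mul_pow_sub_mul_pow] using
    (summable_coeff_mul_descFactorial_mul_pow_sub hC hx n).hasSum.mul_right (x ^ n)

theorem hasSum_sq_mul_pow_mul_coeff (hC : ∀ k, |a k| ≤ C) {x : ℝ} (hx : |x| < 1) :
    HasSum (fun k : ℕ => (k : ℝ) ^ 2 * x ^ k * a k)
      (x ^ 2 * powerSeriesIteratedDeriv a 2 x + x ^ 1 * powerSeriesIteratedDeriv a 1 x) := by
  convert (hasSum_coeff_mul_descFactorial_mul_pow hC hx 2).add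
    (hasSum_coeff_mul_descFactorial_mul_pow hC hx 1) using 1
  funext k
  have hk : k.descFactorial 2 + k.descFactorial 1 = k ^ 2 := by
    rcases k with _ | k
    · rfl
    · simp [Nat.descFactorial_succ]
      ring
  rw [← mul_add, ← add_mul, ← Nat.cast_add, hk]
  push_cast
  ring

end PowerSeries

theorem iteratedDeriv_two_exp_comp {f f' : ℝ → ℝ} {x f'' : ℝ}
    (hf : ∀ᶠ y in 𝓝 x, HasDerivAt f (f' y) y) (hf' : HasDerivAt f' f'' x) :
    iteratedDeriv 2 (fun y => exp (f y)) x = exp (f x) * (f' x ^ 2 + f'') := by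
  have hderiv : deriv (fun y => exp (f y)) =ᶠ[𝓝 x] fun y => exp (f y) * f' y :=
    hf.mono fun y hy => hy.exp.deriv
  rw [iteratedDeriv_succ, iteratedDeriv_one, hderiv.deriv_eq,
    (hf.self_of_nhds.exp.fun_mul hf').deriv]
  ring

/-- In the compound Poisson case `M w = exp (l (G w - 1))`, where
`G w = ∑ₖ qₖ wᵏ` is the generating function of a probability distribution `q` on ℕ and
`l > 0`, with `γ w = M ((1-w)/2) / M (1/2)`, one has
`γ''(0) - γ'(0)² - γ'(0) = l · ∑ₖ k² (1/2)ᵏ qₖ ≥ 0`. -/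
theorem gamma_second_deriv_compound_poisson
    (l : ℝ) (hl : 0 < l)
    (q : ℕ → ℝ) (hq : ∀ k, 0 ≤ q k) (hsum : HasSum q 1)
    (G : ℝ → ℝ) (hG : ∀ w, G w = ∑' k : ℕ, q k * w ^ k)
    (M : ℝ → ℝ) (hM : ∀ w, M w = Real.exp (l * (G w - 1)))
    (γ : ℝ → ℝ) (hγ : ∀ w, γ w = M ((1 - w) / 2) / M (1 / 2)) :
    iteratedDeriv 2 γ 0 - (deriv γ 0) ^ 2 - deriv γ 0 =
      l * ∑' k : ℕ, (k : ℝ) ^ 2 * (1 / 2 : ℝ) ^ k * q k ∧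
    0 ≤ iteratedDeriv 2 γ 0 - (deriv γ 0) ^ 2 - deriv γ 0 := by
  have hq_le : ∀ k, |q k| ≤ 1 := fun k => by
    rw [abs_of_nonneg (hq k)]
    exact le_hasSum hsum k fun j _ => hq j
  set P := powerSeriesIteratedDeriv q
  have hGP : G = P 0 := funext fun w => by simp [hG, P, powerSeriesIteratedDeriv]
  have hγ_exp : γ = fun w => exp (l * (P 0 ((1 - w) / 2) - P 0 (1 / 2))) := funext fun w => by
    rw [hγ, hM, hM, ← exp_sub, hGP]
    ring_nf
  have hP : ∀ n w, |(1 - w) / 2| < 1 →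
      HasDerivAt (fun w => P n ((1 - w) / 2)) (P (n + 1) ((1 - w) / 2) * (-1 / 2)) w :=
    fun n w hw => (hasDerivAt_powerSeriesIteratedDeriv hq_le hw n).comp
      (h := fun w => (1 - w) / 2) w (((hasDerivAt_id w).const_sub 1).div_const 2)
  have hnear : ∀ᶠ w in 𝓝 (0 : ℝ), |(1 - w) / 2| < 1 :=
    (by fun_prop : ContinuousAt (fun w : ℝ => |(1 - w) / 2|) 0).eventually_lt
      continuousAt_const (by norm_num)
  have h₁ : ∀ᶠ w in 𝓝 (0 : ℝ), HasDerivAt (fun w => l * (P 0 ((1 - w) / 2) - P 0 (1 / 2)))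
      (l * (P 1 ((1 - w) / 2) * (-1 / 2))) w :=
    hnear.mono fun w hw => ((hP 0 w hw).sub_const _).const_mul l
  have h₂ : HasDerivAt (fun w => l * (P 1 ((1 - w) / 2) * (-1 / 2)))
      (l * (P 2 (1 / 2) * (-1 / 2) * (-1 / 2))) 0 := by
    simpa using ((hP 1 0 (by norm_num)).mul_const (-1 / 2)).const_mul l
  have hmoment := hasSum_sq_mul_pow_mul_coeff hq_le (x := 1 / 2) (by norm_num)
  have hkey : iteratedDeriv 2 γ 0 - deriv γ 0 ^ 2 - deriv γ 0 =
      l * ((1 / 2) ^ 2 * P 2 (1 / 2) + (1 / 2) ^ 1 * P 1 (1 / 2)) := by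
    rw [hγ_exp, iteratedDeriv_two_exp_comp h₁ h₂, h₁.self_of_nhds.exp.deriv]
    simp only [sub_zero, sub_self, mul_zero, exp_zero, one_mul]
    ring
  rw [hkey, hmoment.tsum_eq]
  exact ⟨rfl, mul_nonneg hl.le (hmoment.nonneg fun k => mul_nonneg (by positivity) (hq k))⟩
end

section
/- Let 0 < p < 1 and let 𝓜(w) = 1 − p + p w^4, so that 𝓜(1/2) = 1 − 15p/16, and define γ(w) = 𝓜((1−w)/2) / 𝓜(1/2). Then γ'''(0) − 3 γ''(0) γ'(0) + 2 (γ'(0))^3 − 2 γ'(0) = p(1−p)(23p − 16) / (16 (𝓜(1/2))^3). In particular, this quantity is strictly negative whenever 0 < p < 16/23. -/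
/-!
Since `γ w = M ((1 - w) / 2) / M (1 / 2)` and `M` is the quartic `1 - p + p w⁴`, the chain rule gives
`γ⁽ⁿ⁾(0) = (-1/2)ⁿ M⁽ⁿ⁾(1/2) / M(1/2)`, i.e. `γ'(0) = -p / (4m)`, `γ''(0) = 3p / (4m)` and
`γ'''(0) = -3p / (2m)` with `m = M(1/2) = 1 - 15p/16 > 0`. Substituting, the expression equals
`p(1-p)(23p-16) / (16m³)`, whose sign is that of `23p - 16`.
-/

theorem iteratedDeriv_comp_mul_add {𝕜 : Type*} [NontriviallyNormedField 𝕜] {n : ℕ} {f : 𝕜 → 𝕜}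
    (hf : ContDiff 𝕜 n f) (c s x : 𝕜) :
    iteratedDeriv n (fun w => f (c * w + s)) x = c ^ n * iteratedDeriv n f (c * x + s) := by
  have hshift : ContDiff 𝕜 n (fun y => f (y + s)) := hf.comp (contDiff_id.add contDiff_const)
  rw [iteratedDeriv_comp_const_mul hshift, iteratedDeriv_comp_add_const]

theorem iteratedDeriv_const_add_mul_pow {𝕜 : Type*} [NontriviallyNormedField 𝕜] {n : ℕ}
    (hn : 0 < n) (k : ℕ) (a b x : 𝕜) :
    iteratedDeriv n (fun w => a + b * w ^ k) x = b * (k.descFactorial n * x ^ (k - n)) := by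
  rw [iteratedDeriv_const_add hn, iteratedDeriv_const_mul_field, iteratedDeriv_pow]

theorem iteratedDeriv_comp_one_sub_div_two_div_const {𝕜 : Type*} [NontriviallyNormedField 𝕜]
    {n : ℕ} {f : 𝕜 → 𝕜} (hf : ContDiff 𝕜 n f) (c : 𝕜) :
    iteratedDeriv n (fun w => f ((1 - w) / 2) / c) 0
      = (-1 / 2) ^ n * iteratedDeriv n f (1 / 2) / c := by
  have haffine : ∀ w : 𝕜, (1 - w) / 2 = -1 / 2 * w + 1 / 2 := fun w => by ring
  simp_rw [haffine, iteratedDeriv_div_const, iteratedDeriv_comp_mul_add hf, mul_zero, zero_add]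

theorem iteratedDeriv_gamma_zero_of_jump_four {p : ℝ} {M γ : ℝ → ℝ}
    (hM : ∀ w, M w = 1 - p + p * w ^ 4) (hγ : ∀ w, γ w = M ((1 - w) / 2) / M (1 / 2))
    {n : ℕ} (hn : 0 < n) :
    iteratedDeriv n γ 0
      = (-1 / 2) ^ n * (p * (Nat.descFactorial 4 n * (1 / 2) ^ (4 - n))) / M (1 / 2) := by
  have hMeq : M = fun w => (1 - p) + p * w ^ 4 := funext hM
  have hMsmooth : ContDiff ℝ n M := by rw [hMeq]; fun_prop
  rw [funext hγ, iteratedDeriv_comp_one_sub_div_two_div_const hMsmooth, hMeq,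
    iteratedDeriv_const_add_mul_pow hn]

/-- For `0 < p < 1`, `M w = 1 - p + p w⁴` (so `M (1/2) = 1 - 15p/16`) and
`γ w = M ((1-w)/2) / M (1/2)`, one has
`γ'''(0) - 3γ''(0)γ'(0) + 2γ'(0)³ - 2γ'(0) = p(1-p)(23p-16) / (16 (M (1/2))³)`,
which is strictly negative whenever `0 < p < 16/23`. -/
theorem imas_fails_for_jump_four
    (p : ℝ) (hp0 : 0 < p) (hp1 : p < 1)
    (M : ℝ → ℝ) (hM : ∀ w, M w = 1 - p + p * w ^ 4)
    (γ : ℝ → ℝ) (hγ : ∀ w, γ w = M ((1 - w) / 2) / M (1 / 2)) :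
    M (1 / 2) = 1 - 15 * p / 16 ∧
    iteratedDeriv 3 γ 0 - 3 * iteratedDeriv 2 γ 0 * deriv γ 0
        + 2 * (deriv γ 0) ^ 3 - 2 * deriv γ 0
      = p * (1 - p) * (23 * p - 16) / (16 * (M (1 / 2)) ^ 3) ∧
    (p < 16 / 23 →
      iteratedDeriv 3 γ 0 - 3 * iteratedDeriv 2 γ 0 * deriv γ 0
          + 2 * (deriv γ 0) ^ 3 - 2 * deriv γ 0 < 0) := by
  have hm : M (1 / 2) = 1 - 15 * p / 16 := by rw [hM]; ring
  have hmpos : 0 < M (1 / 2) := by rw [hm]; linarith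
  have hγ1 : deriv γ 0 = -(p / (4 * M (1 / 2))) := by
    rw [← iteratedDeriv_one, iteratedDeriv_gamma_zero_of_jump_four hM hγ one_pos]
    norm_num [Nat.descFactorial]; ring
  have hγ2 : iteratedDeriv 2 γ 0 = 3 * p / (4 * M (1 / 2)) := by
    rw [iteratedDeriv_gamma_zero_of_jump_four hM hγ two_pos]
    norm_num [Nat.descFactorial]; ring
  have hγ3 : iteratedDeriv 3 γ 0 = -(3 * p / (2 * M (1 / 2))) := by
    rw [iteratedDeriv_gamma_zero_of_jump_four hM hγ three_pos]
    norm_num [Nat.descFactorial]; ring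
  have key : iteratedDeriv 3 γ 0 - 3 * iteratedDeriv 2 γ 0 * deriv γ 0
        + 2 * (deriv γ 0) ^ 3 - 2 * deriv γ 0
      = p * (1 - p) * (23 * p - 16) / (16 * M (1 / 2) ^ 3) := by
    rw [hγ1, hγ2, hγ3]
    field_simp
    rw [hm]
    ring
  refine ⟨hm, key, fun hp23 => ?_⟩
  rw [key]
  exact div_neg_of_neg_of_pos
    (mul_neg_of_pos_of_neg (mul_pos hp0 (by linarith)) (by linarith)) (by positivity)
end

section
/- Let β > 0 and let γ(w) = exp(−β w / 2), D = 2/β, E = F = 1/2. Then for every θ ∈ [−π, −π/3) ∪ (π/3, π], both E·log|2 − e^{iθ}| + D·log|γ(1 − e^{iθ})| < 0 and F·log|2 − e^{iθ}| − D·log|γ(e^{iθ} − 1)| < 0; explicitly, both quantities equal (1/4)·log(5 − 4 cos θ) − (1 − cos θ), which is strictly negative for such θ. -/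
open Real Complex

/-! Since `log |exp z| = Re z`, the term `D · log |γ(±(1 - e^{iθ}))|` is `∓(1 - cos θ)`, and
`log |2 - e^{iθ}| = (1/2) log (5 - 4 cos θ)`. As `5 - 4 cos θ = 1 + 4 (1 - cos θ)`, negativity is
`log (1 + x) < x` for `x > 0`, which applies because `θ ≠ 0` forces `cos θ < 1`. -/

lemma Complex.norm_ofReal_sub_exp_mul_I_sq (a θ : ℝ) :
    ‖(a : ℂ) - exp (θ * I)‖ ^ 2 = a ^ 2 + 1 - 2 * a * Real.cos θ := by
  rw [Complex.sq_norm, Complex.normSq_apply]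
  simp only [sub_re, sub_im, ofReal_re, ofReal_im, exp_ofReal_mul_I_re, exp_ofReal_mul_I_im]
  nlinarith [Real.sin_sq_add_cos_sq θ]

lemma Complex.log_norm_two_sub_exp_mul_I (θ : ℝ) :
    Real.log ‖2 - exp (θ * I)‖ = 1 / 2 * Real.log (5 - 4 * Real.cos θ) := by
  have h := Complex.norm_ofReal_sub_exp_mul_I_sq 2 θ
  push_cast at h
  rw [show 5 - 4 * Real.cos θ = ‖2 - exp (θ * I)‖ ^ 2 by linarith, Real.log_pow]
  ring

lemma Complex.log_norm_exp (z : ℂ) : Real.log ‖exp z‖ = z.re := by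
  rw [Complex.norm_exp, Real.log_exp]

lemma Real.cos_lt_one_of_ne_zero_of_abs_le_pi {θ : ℝ} (h0 : θ ≠ 0) (hπ : |θ| ≤ π) :
    Real.cos θ < 1 := by
  refine (Real.cos_le_one θ).lt_of_ne fun h ↦ h0 ?_
  rw [abs_le] at hπ
  exact (Real.cos_eq_one_iff_of_lt_of_lt (by linarith [pi_pos]) (by linarith [pi_pos])).1 h

/-- For `β > 0`, `γ z = exp (-β z / 2)`, `D = 2/β`, `E = F = 1/2`, and any
`θ ∈ [-π, -π/3) ∪ (π/3, π]`, both
`E·log|2 - e^{iθ}| + D·log|γ(1 - e^{iθ})| < 0` and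
`F·log|2 - e^{iθ}| - D·log|γ(e^{iθ} - 1)| < 0`; explicitly both quantities equal
`(1/4)·log(5 - 4cos θ) - (1 - cos θ)`, which is strictly negative for such `θ`. -/
theorem limcon_holds_for_continuous_time_tasep
    (β : ℝ) (hβ : 0 < β)
    (γ : ℂ → ℂ) (hγ : ∀ z, γ z = Complex.exp (-(β : ℂ) * z / 2))
    (D E F : ℝ) (hD : D = 2 / β) (hE : E = 1 / 2) (hF : F = 1 / 2)
    (θ : ℝ)
    (hθ : θ ∈ Set.Ico (-Real.pi) (-(Real.pi / 3)) ∪ Set.Ioc (Real.pi / 3) Real.pi) :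
    E * Real.log (Norm.norm (2 - Complex.exp (θ * Complex.I)))
        + D * Real.log (Norm.norm (γ (1 - Complex.exp (θ * Complex.I))))
      = (1 / 4) * Real.log (5 - 4 * Real.cos θ) - (1 - Real.cos θ) ∧
    F * Real.log (Norm.norm (2 - Complex.exp (θ * Complex.I)))
        - D * Real.log (Norm.norm (γ (Complex.exp (θ * Complex.I) - 1)))
      = (1 / 4) * Real.log (5 - 4 * Real.cos θ) - (1 - Real.cos θ) ∧
    E * Real.log (Norm.norm (2 - Complex.exp (θ * Complex.I)))
        + D * Real.log (Norm.norm (γ (1 - Complex.exp (θ * Complex.I)))) < 0 ∧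
    F * Real.log (Norm.norm (2 - Complex.exp (θ * Complex.I)))
        - D * Real.log (Norm.norm (γ (Complex.exp (θ * Complex.I) - 1))) < 0 := by
  have hcos : Real.cos θ < 1 := by
    have := pi_pos
    rcases hθ with ⟨h₁, h₂⟩ | ⟨h₁, h₂⟩ <;>
      exact Real.cos_lt_one_of_ne_zero_of_abs_le_pi (by rintro rfl; linarith)
        (abs_le.2 ⟨by linarith, by linarith⟩)
  have hγ_re (z : ℂ) : D * Real.log ‖γ z‖ = -z.re := by
    rw [hγ, Complex.log_norm_exp, hD]
    simp only [div_ofNat_re, neg_mul, neg_re, re_ofReal_mul]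
    field_simp
  have h₁ : E * Real.log ‖2 - exp (θ * I)‖ + D * Real.log ‖γ (1 - exp (θ * I))‖
      = 1 / 4 * Real.log (5 - 4 * Real.cos θ) - (1 - Real.cos θ) := by
    rw [hγ_re, Complex.log_norm_two_sub_exp_mul_I, hE, sub_re, one_re, exp_ofReal_mul_I_re]
    ring
  have h₂ : F * Real.log ‖2 - exp (θ * I)‖ - D * Real.log ‖γ (exp (θ * I) - 1)‖
      = 1 / 4 * Real.log (5 - 4 * Real.cos θ) - (1 - Real.cos θ) := by
    rw [hγ_re, Complex.log_norm_two_sub_exp_mul_I, hF, sub_re, one_re, exp_ofReal_mul_I_re]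
    ring
  have hneg : 1 / 4 * Real.log (5 - 4 * Real.cos θ) - (1 - Real.cos θ) < 0 := by
    have := Real.log_lt_sub_one_of_pos (x := 5 - 4 * Real.cos θ) (by linarith) (by linarith)
    linarith
  exact ⟨h₁, h₂, h₁ ▸ hneg, h₂ ▸ hneg⟩
end

section
/- Let γ : ℝ → ℝ be three times continuously differentiable on a neighborhood of 0 with γ(0) = 1 and γ > 0 near 0, and suppose d := γ'''(0) − 3 γ''(0) γ'(0) + 2 (γ'(0))^3 − 2 γ'(0) ≠ 0. Define D = 2/d, E = (γ''(0) − (γ'(0))^2 − γ'(0))/d, F = ((γ'(0))^2 − γ''(0) − γ'(0))/d, and f(x) = E log(1 + x) − F log(1 − x) + D log γ(x) for x in a neighborhood of 0. Then f(0) = 0, f'(0) = 0, f''(0) = 0, and f'''(0) = 2; that is, f has a double saddle point at x = 0 with third derivative exactly 2. -/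
/-!
Writing `L = log ∘ γ`, the identity `γ · L' = γ'` differentiated by the Leibniz rule gives the
first three derivatives of `L` at a point where `γ = 1`: `γ'`, `γ'' - γ'²` and
`γ''' - 3γ''γ' + 2γ'³`. The same formulas applied to `1 + x` and `1 - x` give the derivatives of
the two other logarithms, and `f⁽ᵏ⁾(0)` is then a linear expression in `E, F, D` which the choice
of these constants makes equal to `0, 0, 2`.
-/

open Filter Topology

section LogComp

variable {γ : ℝ → ℝ} {x : ℝ}

theorem mul_deriv_log_comp_eventuallyEq (hγ : ContDiffAt ℝ 1 γ x) (hx : γ x ≠ 0) :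
    (γ * deriv fun y => Real.log (γ y)) =ᶠ[𝓝 x] deriv γ := by
  filter_upwards [hγ.eventually (by simp), hγ.continuousAt.eventually_ne hx] with y hy hy0
  rw [Pi.mul_apply, deriv.log (hy.differentiableAt one_ne_zero) hy0]
  field_simp

theorem iteratedDeriv_mul_deriv_log_comp (hγ : ContDiffAt ℝ 1 γ x) (hx : γ x ≠ 0) (n : ℕ) :
    iteratedDeriv n (γ * deriv fun y => Real.log (γ y)) x = iteratedDeriv (n + 1) γ x := by
  rw [(mul_deriv_log_comp_eventuallyEq hγ hx).iteratedDeriv_eq, iteratedDeriv_succ']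

theorem deriv_log_comp_leibniz (hγ : ContDiffAt ℝ 3 γ x) (hx : γ x ≠ 0) :
    γ x * deriv (fun y => Real.log (γ y)) x = deriv γ x ∧
    γ x * iteratedDeriv 2 (fun y => Real.log (γ y)) x
      + deriv γ x * deriv (fun y => Real.log (γ y)) x = iteratedDeriv 2 γ x ∧
    γ x * iteratedDeriv 3 (fun y => Real.log (γ y)) x
      + 2 * deriv γ x * iteratedDeriv 2 (fun y => Real.log (γ y)) x
      + iteratedDeriv 2 γ x * deriv (fun y => Real.log (γ y)) x = iteratedDeriv 3 γ x := by
  have hL : ContDiffAt ℝ 2 (deriv fun y => Real.log (γ y)) x :=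
    (hγ.log hx).derivWithin (by norm_num)
  have leibniz (n : ℕ) (hn : n ≤ 2) :=
    (iteratedDeriv_mul (hγ.of_le (by norm_cast; omega)) (hL.of_le (by exact_mod_cast hn))).symm
      |>.trans (iteratedDeriv_mul_deriv_log_comp (hγ.of_le (by norm_num)) hx n)
  have h1 := leibniz 1 (by norm_num)
  have h2 := leibniz 2 le_rfl
  simp only [Nat.reduceAdd, ← iteratedDeriv_succ', Finset.sum_range_succ, Finset.range_one,
    Finset.sum_singleton, Nat.choose_zero_right, Nat.cast_one, iteratedDeriv_zero, one_mul,
    tsub_zero, Nat.choose_succ_self_right, Nat.cast_ofNat, iteratedDeriv_one, Nat.add_one_sub_one,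
    Nat.choose_self, tsub_self, zero_add] at h1 h2
  exact ⟨by simpa using leibniz 0 (by norm_num), by linarith, by linarith⟩

theorem iteratedDeriv_log_comp_of_eq_one (hγ : ContDiffAt ℝ 3 γ x) (hx : γ x = 1) :
    deriv (fun y => Real.log (γ y)) x = deriv γ x ∧
    iteratedDeriv 2 (fun y => Real.log (γ y)) x = iteratedDeriv 2 γ x - deriv γ x ^ 2 ∧
    iteratedDeriv 3 (fun y => Real.log (γ y)) x =
      iteratedDeriv 3 γ x - 3 * iteratedDeriv 2 γ x * deriv γ x + 2 * deriv γ x ^ 3 := by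
  obtain ⟨h1, h2, h3⟩ := deriv_log_comp_leibniz hγ (by simp [hx])
  rw [hx, one_mul] at h1 h2 h3
  rw [h1] at h2 h3
  refine ⟨h1, by linear_combination h2, ?_⟩
  linear_combination h3 - 2 * deriv γ x * h2

end LogComp

theorem iteratedDeriv_log_one_add_zero :
    deriv (fun y : ℝ => Real.log (1 + y)) 0 = 1 ∧
    iteratedDeriv 2 (fun y : ℝ => Real.log (1 + y)) 0 = -1 ∧
    iteratedDeriv 3 (fun y : ℝ => Real.log (1 + y)) 0 = 2 := by
  have hhigh {n : ℕ} (hn : 2 ≤ n) : iteratedDeriv n (fun y : ℝ => 1 + y) 0 = 0 := by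
    rw [iteratedDeriv_const_add (by omega), iteratedDeriv_fun_id_zero, if_neg (by omega)]
  obtain ⟨h1, h2, h3⟩ :=
    iteratedDeriv_log_comp_of_eq_one (γ := fun y : ℝ => 1 + y) (x := 0) (by fun_prop) (by norm_num)
  norm_num [hhigh] at h1 h2 h3
  exact ⟨h1, h2, h3⟩

theorem iteratedDeriv_log_one_sub_zero :
    deriv (fun y : ℝ => Real.log (1 - y)) 0 = -1 ∧
    iteratedDeriv 2 (fun y : ℝ => Real.log (1 - y)) 0 = -1 ∧
    iteratedDeriv 3 (fun y : ℝ => Real.log (1 - y)) 0 = -2 := by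
  have hhigh {n : ℕ} (hn : 2 ≤ n) : iteratedDeriv n (fun y : ℝ => 1 - y) 0 = 0 := by
    rw [iteratedDeriv_const_sub (by omega), iteratedDeriv_neg, iteratedDeriv_fun_id_zero,
      if_neg (by omega), neg_zero]
  obtain ⟨h1, h2, h3⟩ :=
    iteratedDeriv_log_comp_of_eq_one (γ := fun y : ℝ => 1 - y) (x := 0) (by fun_prop) (by norm_num)
  norm_num [hhigh] at h1 h2 h3
  exact ⟨h1, h2, h3⟩

theorem iteratedDeriv_fun_mul_sub_mul_add_mul {𝕜 : Type*} [NontriviallyNormedField 𝕜] {n : ℕ}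
    {u v w : 𝕜 → 𝕜} {x : 𝕜} (hu : ContDiffAt 𝕜 n u x) (hv : ContDiffAt 𝕜 n v x)
    (hw : ContDiffAt 𝕜 n w x) (a b c : 𝕜) :
    iteratedDeriv n (fun y => a * u y - b * v y + c * w y) x =
      a * iteratedDeriv n u x - b * iteratedDeriv n v x + c * iteratedDeriv n w x := by
  have hu' : ContDiffAt 𝕜 n (fun y => a * u y) x := contDiffAt_const.mul hu
  have hv' : ContDiffAt 𝕜 n (fun y => b * v y) x := contDiffAt_const.mul hv
  rw [iteratedDeriv_fun_add (hu'.sub hv') (contDiffAt_const.mul hw), iteratedDeriv_fun_sub hu' hv',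
    iteratedDeriv_const_mul_field, iteratedDeriv_const_mul_field, iteratedDeriv_const_mul_field]

theorem saddle_point_double_saddle_general
    (γ : ℝ → ℝ) (hγ : ContDiffAt ℝ 3 γ 0) (hγ0 : γ 0 = 1)
    (d : ℝ)
    (hd : d = iteratedDeriv 3 γ 0 - 3 * iteratedDeriv 2 γ 0 * deriv γ 0
        + 2 * (deriv γ 0) ^ 3 - 2 * deriv γ 0)
    (hd0 : d ≠ 0)
    (D E F : ℝ)
    (hD : D = 2 / d)
    (hE : E = (iteratedDeriv 2 γ 0 - (deriv γ 0) ^ 2 - deriv γ 0) / d)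
    (hF : F = ((deriv γ 0) ^ 2 - iteratedDeriv 2 γ 0 - deriv γ 0) / d)
    (f : ℝ → ℝ)
    (hf : ∀ x, f x = E * Real.log (1 + x) - F * Real.log (1 - x) + D * Real.log (γ x)) :
    f 0 = 0 ∧ deriv f 0 = 0 ∧ iteratedDeriv 2 f 0 = 0 ∧ iteratedDeriv 3 f 0 = 2 := by
  obtain ⟨p1, p2, p3⟩ := iteratedDeriv_log_one_add_zero
  obtain ⟨m1, m2, m3⟩ := iteratedDeriv_log_one_sub_zero
  obtain ⟨g1, g2, g3⟩ := iteratedDeriv_log_comp_of_eq_one hγ hγ0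
  have hlog {g : ℝ → ℝ} (hg : ContDiffAt ℝ 3 g 0) (hg0 : g 0 = 1) {n : ℕ} (hn : n ≤ 3) :
      ContDiffAt ℝ n (fun y => Real.log (g y)) 0 :=
    (hg.log (by simp [hg0])).of_le (by exact_mod_cast hn)
  have hf_iter {n : ℕ} (hn : n ≤ 3) := funext hf ▸ iteratedDeriv_fun_mul_sub_mul_add_mul
    (hlog (g := fun y => 1 + y) (by fun_prop) (by norm_num) hn)
    (hlog (g := fun y => 1 - y) (by fun_prop) (by norm_num) hn) (hlog hγ hγ0 hn) E F D
  refine ⟨by simp [hf, hγ0], ?_, ?_, ?_⟩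
  · rw [← iteratedDeriv_one, hf_iter le_add_self]
    simp only [iteratedDeriv_one]
    rw [p1, m1, g1, hE, hF, hD]
    field_simp
    ring
  · rw [hf_iter (by norm_num), p2, m2, g2, hE, hF, hD]
    field_simp
    ring
  · rw [hf_iter (by norm_num), p3, m3, g3, hE, hF, hD]
    field_simp
    rw [hd]
    ring

/-- Saddle point computation.  If `γ` is C³ on a neighborhood of `0`,
`γ 0 = 1`, `γ > 0` near `0`, and `d := γ'''(0) - 3γ''(0)γ'(0) + 2γ'(0)³ - 2γ'(0) ≠ 0`,
then with `D = 2/d`, `E = (γ''(0) - γ'(0)² - γ'(0))/d`, `F = (γ'(0)² - γ''(0) - γ'(0))/d`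
and `f x = E log(1+x) - F log(1-x) + D log (γ x)`, one has
`f 0 = 0`, `f' 0 = 0`, `f'' 0 = 0`, `f''' 0 = 2`. -/
theorem saddle_point_double_saddle
    (γ : ℝ → ℝ) (hγ : ContDiffAt ℝ 3 γ 0) (hγ0 : γ 0 = 1)
    (hγpos : ∀ᶠ x in nhds (0 : ℝ), 0 < γ x)
    (d : ℝ)
    (hd : d = iteratedDeriv 3 γ 0 - 3 * iteratedDeriv 2 γ 0 * deriv γ 0
        + 2 * (deriv γ 0) ^ 3 - 2 * deriv γ 0)
    (hd0 : d ≠ 0)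
    (D E F : ℝ)
    (hD : D = 2 / d)
    (hE : E = (iteratedDeriv 2 γ 0 - (deriv γ 0) ^ 2 - deriv γ 0) / d)
    (hF : F = ((deriv γ 0) ^ 2 - iteratedDeriv 2 γ 0 - deriv γ 0) / d)
    (f : ℝ → ℝ)
    (hf : ∀ x, f x = E * Real.log (1 + x) - F * Real.log (1 - x) + D * Real.log (γ x)) :
    f 0 = 0 ∧ deriv f 0 = 0 ∧ iteratedDeriv 2 f 0 = 0 ∧ iteratedDeriv 3 f 0 = 2 :=
  saddle_point_double_saddle_general γ hγ hγ0 d hd hd0 D E F hD hE hF f hf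
end
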